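/- arXiv:1801.10256 — 3 statements merged into one kernel-verified Lean document; each statement's English description precedes it below -/
import Mathlib

section
/- Let f : ℝ → ℂ be almost periodic with f(x) ≥ 0 for all x and sup_x f(x) > 2. Then there exist finitely many real translates f_0, ..., f_{n-1} of f such that the sum g = f_0 + ⋯ + f_{n-1} satisfies g(x) > 1/2 for all x ∈ ℝ. -/
/-!
Near a point `x₀` with `f x₀ > 2` the function stays above `3/2`, say on `(x₀ - δ, x₀ + δ)`.
The `1`-translation numbers of `f` meet every interval of some length `L`, so every `x` is
`x₀ + u + τ` with `u ∈ [0, L]` and `τ` a `1`-translation number. Shifting by the grid points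
`k δ ∈ [0, L + δ)` brings `u` into `[0, δ)`, so some translate `f (x - k δ)` is within `1` of
a value above `3/2`; since `f ≥ 0`, the sum of these translates exceeds `1/2`.
-/

open Finset

/-- A continuous function `f : ℝ → ℂ` is almost periodic if for every `ε > 0` the set of
`ε`-translation numbers of `f` is relatively dense in `ℝ`. -/
def IsAlmostPeriodic (f : ℝ → ℂ) : Prop :=
  Continuous f ∧ ∀ ε : ℝ, 0 < ε → ∃ L : ℝ, 0 < L ∧ ∀ a : ℝ,
    ∃ τ ∈ Set.Icc a (a + L), ∀ x : ℝ, ‖f (x + τ) - f x‖ ≤ ε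

lemma exists_nat_lt_floor_add_one_sub_mul_mem_Ico {d u L : ℝ} (hd : 0 < d) (hu : 0 ≤ u)
    (huL : u ≤ L) : ∃ k < ⌊L / d⌋₊ + 1, u - k * d ∈ Set.Ico 0 d := by
  refine ⟨⌊u / d⌋₊, Nat.lt_succ_of_le (Nat.floor_le_floor (by gcongr)), ?_, ?_⟩
  · have := Nat.floor_le (div_nonneg hu hd.le)
    rw [le_div_iff₀ hd] at this
    linarith
  · have := Nat.lt_floor_add_one (u / d)
    rw [div_lt_iff₀ hd] at this
    linarith

lemma IsAlmostPeriodic.exists_shifts_close_to_ball {f : ℝ → ℂ} (hf : IsAlmostPeriodic f)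
    (x₀ : ℝ) {ε δ : ℝ} (hε : 0 < ε) (hδ : 0 < δ) :
    ∃ n : ℕ, 0 < n ∧ ∃ s : Fin n → ℝ, ∀ x : ℝ,
      ∃ k : Fin n, ∃ y, dist y x₀ < δ ∧ ‖f (x - s k) - f y‖ ≤ ε := by
  obtain ⟨L, -, hL⟩ := hf.2 ε hε
  refine ⟨⌊L / δ⌋₊ + 1, Nat.succ_pos _, fun k => k * δ, fun x => ?_⟩
  obtain ⟨τ, ⟨hτ_ge, hτ_le⟩, hτ⟩ := hL (x - x₀ - L)
  obtain ⟨k, hk, hr_nonneg, hr_lt⟩ :=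
    exists_nat_lt_floor_add_one_sub_mul_mem_Ico (u := x - x₀ - τ) (L := L) hδ
      (by linarith) (by linarith)
  refine ⟨⟨k, hk⟩, x₀ + (x - x₀ - τ - k * δ), ?_, ?_⟩
  · rw [Real.dist_eq, add_sub_cancel_left, abs_of_nonneg hr_nonneg]
    exact hr_lt
  · have hx : x - k * δ = x₀ + (x - x₀ - τ - k * δ) + τ := by ring
    exact hx ▸ hτ _

/-- If `f` is a nonnegative (real-valued) almost periodic function with some value exceeding `2`,
then finitely many translates of `f` sum to a function everywhere `> 1/2`. -/
theorem stmt2 (f : ℝ → ℂ) (hf : IsAlmostPeriodic f)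
    (hpos : ∀ x : ℝ, ∃ r : ℝ, 0 ≤ r ∧ f x = (r : ℂ))
    (hsup : ∃ x : ℝ, 2 < (f x).re) :
    ∃ n : ℕ, 0 < n ∧ ∃ s : Fin n → ℝ,
      ∀ x : ℝ, (1 : ℝ) / 2 < (∑ k : Fin n, f (x - s k)).re := by
  have hre_nonneg : ∀ y, 0 ≤ (f y).re := fun y => by
    obtain ⟨r, hr, hfy⟩ := hpos y
    simpa [hfy] using hr
  obtain ⟨x₀, hx₀⟩ := hsup
  have hx₀' : (3 : ℝ) / 2 < (f x₀).re := by linarith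
  obtain ⟨δ, hδ, hball⟩ : ∃ δ > 0, ∀ y, dist y x₀ < δ → 3 / 2 < (f y).re :=
    Metric.eventually_nhds_iff.mp <|
      ((Complex.continuous_re.comp hf.1).tendsto x₀).eventually_const_lt hx₀'
  obtain ⟨n, hn, s, hs⟩ := hf.exists_shifts_close_to_ball x₀ one_pos hδ
  refine ⟨n, hn, s, fun x => ?_⟩
  obtain ⟨k, y, hy, hclose⟩ := hs x
  have hre_close := abs_le.mp ((Complex.abs_re_le_norm _).trans hclose)
  rw [Complex.sub_re] at hre_close
  calc (1 : ℝ) / 2 < (f (x - s k)).re := by linarith [hball y hy]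
    _ ≤ ∑ j, (f (x - s j)).re := single_le_sum (f := fun j => (f (x - s j)).re)
        (fun j _ => hre_nonneg _) (mem_univ k)
    _ = (∑ j, f (x - s j)).re := (Complex.re_sum _ _).symm
end

section
/- For every almost periodic function f on ℝ and every λ ∈ ℝ, the limit ε_λ(f) = lim_{T→∞} (1/(2T)) ∫_{-T}^{T} f(t) e^{-iλt} dt exists. -/
/-!
The averages `M_T g = (2T)⁻¹ ∫_{-T}^{T} g` are continuous linear functionals of norm at most `1`
on `ℝ →ᵇ ℂ`. Being equicontinuous, the set of `g` for which `M_T g` converges is closed (a Cauchy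
`ε/3` argument, `ℂ` being complete); it is also a subspace, and it contains every exponential
`e_a`, since `M_T e_0 = 1` and `M_T e_a = O(1/T)` for `a ≠ 0`. Hence the mean exists on all of
`AP(ℝ)`. The `λ`-th coefficient of `f` is the mean of `f e_{-λ}`, and `AP(ℝ)` is stable under
multiplication by exponentials because `e_m e_n = e_{m+n}`.
-/

open BoundedContinuousFunction Filter

/-- The exponential `x ↦ e^{iλx}` as a bounded continuous function on `ℝ`. -/
noncomputable def expB (l : ℝ) : BoundedContinuousFunction ℝ ℂ :=
  BoundedContinuousFunction.ofNormedAddCommGroup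
    (fun x : ℝ => Complex.exp (Complex.I * l * x))
    (by fun_prop) 1
    (by
      intro x
      rw [Complex.norm_exp]
      simp [Complex.mul_re])

/-- `AP(ℝ)`: the uniform closure of the linear span of the exponentials. -/
noncomputable def AP : Set (BoundedContinuousFunction ℝ ℂ) :=
  closure ((Submodule.span ℂ (Set.range expB) : Submodule ℂ (BoundedContinuousFunction ℝ ℂ)) :
    Set (BoundedContinuousFunction ℝ ℂ))

open Topology

theorem EquicontinuousAt.cauchy_map_of_mem_closure {ι X α : Type*} [TopologicalSpace X]
    [UniformSpace α] {l : Filter ι} {F : ι → X → α} {s : Set X} {x : X}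
    (hF : EquicontinuousAt F x) (hs : ∀ y ∈ s, Cauchy (map (F · y) l)) (hx : x ∈ closure s) :
    Cauchy (map (F · x) l) := by
  obtain ⟨y₀, hy₀⟩ := closure_nonempty_iff.mp ⟨x, hx⟩
  have : l.NeBot := map_neBot_iff _ |>.mp (hs y₀ hy₀).1
  refine cauchy_map_iff'.mpr fun U hU => ?_
  obtain ⟨V, hV, _, hVU⟩ := comp_comp_symm_mem_uniformity_sets hU
  obtain ⟨y, hxy, hys⟩ := mem_closure_iff_nhds.mp hx _ (hF V hV)
  refine mem_map.mpr ?_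
  filter_upwards [(cauchy_map_iff'.mp (hs y hys)).eventually_mem hV] with p hp
  exact hVU ⟨_, ⟨_, hxy p.1, hp⟩, SetRel.symm V (hxy p.2)⟩

theorem Equicontinuous.isClosed_setOf_exists_tendsto {ι X α : Type*} [TopologicalSpace X]
    [UniformSpace α] [CompleteSpace α] {l : Filter ι} [l.NeBot] {F : ι → X → α}
    (hF : Equicontinuous F) : IsClosed {x | ∃ c, Tendsto (F · x) l (𝓝 c)} := by
  simp_rw [← cauchy_map_iff_exists_tendsto]
  exact closure_subset_iff_isClosed.mp fun x hx =>
    (hF x).cauchy_map_of_mem_closure (fun _ => id) hx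

theorem expB_apply (m x : ℝ) : expB m x = Complex.exp (Complex.I * m * x) :=
  rfl

theorem expB_zero : expB 0 = 1 := by
  ext x
  simp [expB_apply]

theorem expB_add (m n : ℝ) : expB (m + n) = expB m * expB n := by
  ext x
  simp only [expB_apply, coe_mul, Pi.mul_apply, ← Complex.exp_add]
  push_cast
  congr 1
  ring

theorem norm_integral_expB_le {a : ℝ} (ha : a ≠ 0) (s t : ℝ) :
    ‖∫ x in s..t, expB a x‖ ≤ 2 / |a| := by
  have hIa : Complex.I * a ≠ 0 := mul_ne_zero Complex.I_ne_zero (Complex.ofReal_ne_zero.mpr ha)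
  simp only [expB_apply]
  rw [integral_exp_mul_complex hIa, norm_div, norm_mul, Complex.norm_I, one_mul,
    Complex.norm_real, Real.norm_eq_abs]
  gcongr
  calc _ ≤ ‖Complex.exp (Complex.I * a * t)‖ + ‖Complex.exp (Complex.I * a * s)‖ :=
        norm_sub_le _ _
    _ = 2 := by
        simp only [mul_assoc, ← Complex.ofReal_mul, Complex.norm_exp_I_mul_ofReal]
        norm_num

theorem norm_one_div_two_mul_intervalIntegral_le (g : ℝ →ᵇ ℂ) (T : ℝ) :
    ‖(1 / (2 * T) : ℂ) * ∫ x in (-T)..T, g x‖ ≤ ‖g‖ := by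
  rcases eq_or_ne T 0 with rfl | hT
  · simp
  have hint : ‖∫ x in (-T)..T, g x‖ ≤ ‖g‖ * |T - -T| :=
    intervalIntegral.norm_integral_le_of_norm_le_const fun x _ => g.norm_coe_le_norm x
  calc ‖(1 / (2 * T) : ℂ) * ∫ x in (-T)..T, g x‖ ≤ |2 * T|⁻¹ * (‖g‖ * |T - -T|) := by
        rw [norm_mul]
        gcongr
        simp
    _ = ‖g‖ := by
        rw [sub_neg_eq_add, ← two_mul]
        field_simp

noncomputable def symmetricMean (T : ℝ) : (ℝ →ᵇ ℂ) →L[ℂ] ℂ :=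
  LinearMap.mkContinuous
    { toFun := fun g => (1 / (2 * T) : ℂ) * ∫ x in (-T)..T, g x
      map_add' := fun f g => by
        simp only [coe_add, Pi.add_apply]
        rw [intervalIntegral.integral_add (f.continuous.intervalIntegrable _ _)
          (g.continuous.intervalIntegrable _ _), mul_add]
      map_smul' := fun c g => by
        simp only [coe_smul, smul_eq_mul, intervalIntegral.integral_const_mul, RingHom.id_apply]
        ring }
    1 fun g => (norm_one_div_two_mul_intervalIntegral_le g T).trans_eq (one_mul _).symm

theorem symmetricMean_apply (T : ℝ) (g : ℝ →ᵇ ℂ) :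
    symmetricMean T g = (1 / (2 * T) : ℂ) * ∫ x in (-T)..T, g x :=
  rfl

theorem equicontinuous_symmetricMean :
    Equicontinuous fun T : ℝ => (symmetricMean T : (ℝ →ᵇ ℂ) → ℂ) :=
  have hbound : ∃ C, ∀ T g, ‖symmetricMean T g‖ ≤ C * ‖g‖ :=
    ⟨1, fun T g => by
      rw [one_mul, symmetricMean_apply]
      exact norm_one_div_two_mul_intervalIntegral_le g T⟩
  ((NormedSpace.equicontinuous_TFAE symmetricMean).out 3 1).mp hbound

theorem tendsto_symmetricMean_expB (a : ℝ) :
    Tendsto (fun T => symmetricMean T (expB a)) atTop (𝓝 (if a = 0 then 1 else 0)) := by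
  split_ifs with ha
  · refine tendsto_const_nhds.congr' ?_
    filter_upwards [eventually_gt_atTop 0] with T hT
    have hT' : (T : ℂ) ≠ 0 := Complex.ofReal_ne_zero.mpr hT.ne'
    rw [symmetricMean_apply, ha, expB_zero]
    simp only [one_div, mul_inv_rev, coe_one, Pi.one_apply, intervalIntegral.integral_const,
      sub_neg_eq_add, Complex.real_smul, Complex.ofReal_add, mul_one]
    field_simp
    ring
  · have hbound : ∀ T, ‖symmetricMean T (expB a)‖ ≤ |a|⁻¹ * |T|⁻¹ := fun T => by
      rw [symmetricMean_apply, norm_mul]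
      calc _ ≤ ‖(1 / (2 * T) : ℂ)‖ * (2 / |a|) := by gcongr; exact norm_integral_expB_le ha _ _
        _ = |a|⁻¹ * |T|⁻¹ := by
          simp only [one_div, mul_inv_rev, Complex.norm_mul, norm_inv, Complex.norm_real,
            Real.norm_eq_abs, Complex.norm_ofNat]
          field_simp
    have hdecay : Tendsto (fun T : ℝ => |a|⁻¹ * |T|⁻¹) atTop (𝓝 0) := by
      simpa using (tendsto_inv_atTop_zero.comp tendsto_abs_atTop_atTop).const_mul |a|⁻¹
    exact squeeze_zero_norm hbound hdecay

theorem mul_expB_mem_AP {f : ℝ →ᵇ ℂ} (hf : f ∈ AP) (m : ℝ) : f * expB m ∈ AP := by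
  have hspan : Submodule.span ℂ (Set.range expB) ≤
      (Submodule.span ℂ (Set.range expB)).comap (LinearMap.mulRight ℂ (expB m)) :=
    Submodule.span_le.mpr <| Set.range_subset_iff.mpr fun n =>
      Submodule.subset_span ⟨n + m, expB_add n m⟩
  exact map_mem_closure (f := (· * expB m)) (continuous_mul_const _) hf fun g hg => hspan hg

theorem exists_tendsto_symmetricMean_of_mem_AP {f : ℝ →ᵇ ℂ} (hf : f ∈ AP) :
    ∃ c, Tendsto (fun T => symmetricMean T f) atTop (𝓝 c) := by
  refine closure_minimal (fun g hg => ?_)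
    equicontinuous_symmetricMean.isClosed_setOf_exists_tendsto hf
  induction hg using Submodule.span_induction with
  | mem _ hg =>
    obtain ⟨a, rfl⟩ := hg
    exact ⟨_, tendsto_symmetricMean_expB a⟩
  | zero => exact ⟨0, by simp⟩
  | add g h _ _ hg hh =>
    obtain ⟨c, hc⟩ := hg
    obtain ⟨d, hd⟩ := hh
    exact ⟨c + d, by simpa using hc.add hd⟩
  | smul z g _ hg =>
    obtain ⟨c, hc⟩ := hg
    exact ⟨z * c, by simpa using hc.const_mul z⟩

/-- For every almost periodic `f` and every `λ ∈ ℝ`, the Bohr–Fourier coefficient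
`ε_λ(f) = lim_{T→∞} (1/2T) ∫_{-T}^{T} f(t) e^{-iλt} dt` exists. -/
theorem stmt5 (f : BoundedContinuousFunction ℝ ℂ) (hf : f ∈ AP) (l : ℝ) :
    ∃ c : ℂ, Tendsto
      (fun T : ℝ => (1 / (2 * T) : ℂ) * ∫ x in (-T)..T, f x * Complex.exp (-(Complex.I * l * x)))
      atTop (nhds c) := by
  obtain ⟨c, hc⟩ := exists_tendsto_symmetricMean_of_mem_AP (mul_expB_mem_AP hf (-l))
  refine ⟨c, hc.congr fun T => ?_⟩
  simp [symmetricMean_apply, expB_apply]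
end

section
/- The crossed product AP(ℝ) ⋊_τ ℝ_d, where τ is the translation action, is a simple C*-algebra: it has no nontrivial closed two-sided ideals. -/
/-
Let `x ≠ 0` lie in the closed ideal `I` and put `y = x⋆x`. Each monomial `ι (e l) * u s` is an
eigenvector, with eigenvalue `exp (i (μ s - ν l))`, of conjugation by the unitary
`w = u ν * ι (e μ)`. Only countably many monomials are needed to approximate `y`, so `μ, ν` can be
chosen with all these eigenvalues `≠ 1` except at the monomial `1`. The Cesàro means
`n⁻¹ ∑_{k<n} wᵏ y w⁻ᵏ` then lie in `I` and converge to `φ y • 1`, where `φ = ε 0 ∘ E 0`.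
Finally `φ y ≠ 0`: the times `k` at which `wᵏ` almost commutes with a polynomial approximant of
`y` have positive density (recurrence of a rotation of the compact group `Λ → Circle`), and since
all conjugates of `y` are positive, these times alone give the means norm at least a fixed
fraction of `‖y‖`. Hence `1 ∈ I`.
-/

open Filter Topology Finset Submodule

theorem tendsto_inv_mul_geom_sum_of_ne_one {z : ℂ} (hz : ‖z‖ ≤ 1) (h1 : z ≠ 1) :
    Tendsto (fun n : ℕ => (n : ℂ)⁻¹ * ∑ k ∈ range n, z ^ k) atTop (𝓝 0) := by
  refine squeeze_zero_norm (fun n => ?_) (tendsto_const_div_atTop_nhds_zero_nat (2 / ‖z - 1‖))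
  have hpow : ‖z ^ n - 1‖ ≤ 2 := by
    calc ‖z ^ n - 1‖ ≤ ‖z‖ ^ n + ‖(1 : ℂ)‖ := (norm_sub_le _ _).trans_eq (by rw [norm_pow])
      _ ≤ 1 + 1 := by gcongr; exacts [pow_le_one₀ (norm_nonneg z) hz, norm_one.le]
      _ = 2 := by norm_num
  rw [geom_sum_eq h1, norm_mul, norm_div, norm_inv, Complex.norm_natCast, div_eq_inv_mul _ (n : ℝ)]
  gcongr

open scoped Classical in
theorem exists_pos_density_pow_mem {G : Type*} [Group G] [TopologicalSpace G]
    [IsTopologicalGroup G] [CompactSpace G] (g : G) {U : Set G} (hU : U ∈ 𝓝 1) :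
    ∃ δ : ℝ, 0 < δ ∧ ∀ᶠ n : ℕ in atTop, δ * n ≤ #{k ∈ range n | g ^ k ∈ U} := by
  obtain ⟨V, hVU, hVo, hV1⟩ := mem_nhds_iff.1 hU
  have hcover : closure (Set.range (g ^ · : ℕ → G)) ⊆ ⋃ c : ℕ, (fun y => (g ^ c)⁻¹ * y) ⁻¹' V := by
    intro x hx
    obtain ⟨_, hyx, c, rfl⟩ := mem_closure_iff.1 hx {y | y⁻¹ * x ∈ V}
      (hVo.preimage (continuous_inv.mul continuous_const)) (by simpa using hV1)
    exact Set.mem_iUnion.2 ⟨c, hyx⟩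
  obtain ⟨t, ht⟩ := isClosed_closure.isCompact.elim_finite_subcover _
    (fun c => hVo.preimage (continuous_const_mul _)) hcover
  set K := t.sup id
  have ht0 : 0 < #t := by
    obtain ⟨c, hc, -⟩ := Set.mem_iUnion₂.1 (ht (subset_closure ⟨0, rfl⟩))
    exact card_pos.2 ⟨c, hc⟩
  -- every time `k ≥ K` is a good time shifted by one of the finitely many `c ∈ t`
  have hcount : ∀ n, n ≤ K + #t * #{k ∈ range n | g ^ k ∈ U} := by
    intro n
    have hsub : Ico K n ⊆ t.biUnion fun c => {k ∈ range n | g ^ k ∈ U}.image (· + c) := by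
      intro k hk
      obtain ⟨hKk, hkn⟩ := mem_Ico.1 hk
      obtain ⟨c, hc, hck⟩ := Set.mem_iUnion₂.1 (ht (subset_closure ⟨k, rfl⟩))
      have hc_le : c ≤ k := (le_sup (f := id) hc).trans hKk
      refine mem_biUnion.2 ⟨c, hc, mem_image.2 ⟨k - c, mem_filter.2 ⟨?_, hVU ?_⟩, ?_⟩⟩
      · exact mem_range.2 ((Nat.sub_le k c).trans_lt hkn)
      · rw [pow_sub g hc_le, (Commute.pow_pow_self g k c).inv_right.eq]; exact hck
      · exact Nat.sub_add_cancel hc_le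
    calc n ≤ K + #(Ico K n) := by rw [Nat.card_Ico]; omega
      _ ≤ K + #t * #{k ∈ range n | g ^ k ∈ U} := by
        gcongr
        refine (card_le_card hsub).trans (card_biUnion_le.trans ?_)
        exact (sum_le_sum fun c _ => card_image_le).trans (by rw [sum_const, smul_eq_mul])
  refine ⟨1 / (2 * #t), by positivity, eventually_atTop.2 ⟨2 * K, fun n hn => ?_⟩⟩
  have h1 : (n : ℝ) ≤ K + #t * #{k ∈ range n | g ^ k ∈ U} := by exact_mod_cast hcount n
  have h2 : (2 * K : ℝ) ≤ n := by exact_mod_cast hn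
  have h3 : (0 : ℝ) < #t := by exact_mod_cast ht0
  rw [div_mul_eq_mul_div, one_mul, div_le_iff₀ (by positivity)]
  nlinarith

lemma exists_forall_circleExp_add_mul_ne_one {Λ : Set (ℝ × ℝ)} (hΛ : Λ.Countable) :
    ∃ μ : ℝ, ∀ p ∈ Λ, p.2 ≠ 0 → Circle.exp (p.1 + μ * p.2) ≠ 1 := by
  have hbad : (⋃ p ∈ Λ, ⋃ n : ℤ, {(n * (2 * Real.pi) - p.1) / p.2}).Countable :=
    hΛ.biUnion fun p _ => Set.countable_iUnion fun n => Set.countable_singleton _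
  obtain ⟨μ, hμ⟩ := (hbad.dense_compl ℝ).nonempty
  refine ⟨μ, fun p hp hp2 h1 => hμ ?_⟩
  obtain ⟨n, hn⟩ := Circle.exp_eq_one.1 h1
  refine Set.mem_biUnion hp (Set.mem_iUnion.2 ⟨n, ?_⟩)
  rw [Set.mem_singleton_iff, ← hn]
  field_simp
  ring

lemma exists_forall_circleExp_sub_ne_one {Λ : Set (ℝ × ℝ)} (hΛ : Λ.Countable) :
    ∃ μ ν : ℝ, ∀ p ∈ Λ, p ≠ 0 → Circle.exp (μ * p.2 - ν * p.1) ≠ 1 := by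
  obtain ⟨ν, hν⟩ := exists_forall_circleExp_add_mul_ne_one (hΛ.image fun p => ((0 : ℝ), -p.1))
  obtain ⟨μ, hμ⟩ := exists_forall_circleExp_add_mul_ne_one (hΛ.image fun p => (-(ν * p.1), p.2))
  refine ⟨μ, ν, fun p hp hp0 h1 => hp0 ?_⟩
  have hs : p.2 = 0 := by
    by_contra hs
    exact hμ _ ⟨p, hp, rfl⟩ hs (by rw [← h1]; ring_nf)
  have hl : p.1 = 0 := by
    by_contra hl
    exact hν _ ⟨p, hp, rfl⟩ (neg_ne_zero.2 hl) (by rw [← h1, hs]; ring_nf)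
  exact Prod.ext hl hs

theorem exists_countable_mem_closure_span {R M ι : Type*} [Semiring R] [AddCommMonoid M]
    [Module R M] [TopologicalSpace M] [FrechetUrysohnSpace M] {v : ι → M} {x : M}
    (hx : x ∈ closure (span R (Set.range v) : Set M)) :
    ∃ Λ : Set ι, Λ.Countable ∧ x ∈ closure (span R (v '' Λ) : Set M) := by
  obtain ⟨b, hb, hbx⟩ := mem_closure_iff_seq_limit.1 hx
  choose c hc using fun n => Finsupp.mem_span_range_iff_exists_finsupp.1 (hb n)
  refine ⟨⋃ n, ((c n).support : Set ι), Set.countable_iUnion fun n => (c n).support.countable_toSet,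
    mem_closure_of_tendsto hbx (Eventually.of_forall fun n => ?_)⟩
  rw [← hc n]
  exact sum_mem fun i hi => smul_mem _ _ (subset_span ⟨i, Set.mem_iUnion.2 ⟨n, hi⟩, rfl⟩)

lemma TwoSidedIdeal.exists_coe_eq {R : Type*} [Ring R] {S : Set R} (hS : S.Nonempty)
    (hadd : ∀ x y, x ∈ S → y ∈ S → x + y ∈ S) (hmul : ∀ x z, x ∈ S → z * x ∈ S ∧ x * z ∈ S) :
    ∃ I : TwoSidedIdeal R, (I : Set R) = S := by
  obtain ⟨x₀, hx₀⟩ := hS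
  have h0 : (0 : R) ∈ S := by simpa using (hmul x₀ 0 hx₀).1
  exact ⟨.mk' S h0 (hadd _ _) (fun {x} hx => by simpa using (hmul x (-1) hx).1)
    (fun {x y} hy => (hmul y x hy).1) (fun {x y} hx => (hmul x y hx).2), TwoSidedIdeal.coe_mk' ..⟩

lemma TwoSidedIdeal.algebra_smul_mem {R A : Type*} [CommSemiring R] [Ring A] [Algebra R A]
    (I : TwoSidedIdeal A) (r : R) {x : A} (hx : x ∈ I) : r • x ∈ I := by
  rw [Algebra.smul_def]
  exact I.mul_mem_left _ _ hx

lemma mul_eq_mul_of_conj_eq {R : Type*} [Monoid R] [StarMul R] {u x y : R}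
    (hu : u ∈ unitary R) (h : u * x * star u = y) : u * x = y * u := by
  rw [← h, mul_assoc _ (star u), Unitary.star_mul_self_of_mem hu, mul_one]

lemma iterate_conj_apply {R : Type*} [Monoid R] [StarMul R] (w z : R) (k : ℕ) :
    (w * · * star w)^[k] z = w ^ k * z * star (w ^ k) := by
  induction k with
  | zero => simp
  | succ k ih => rw [Function.iterate_succ_apply', ih, pow_succ', star_mul]; simp only [mul_assoc]

section Algebra

variable {R : Type*} [Ring R] [StarRing R] [Algebra ℂ R]

lemma birkhoffAverage_conj_apply (w z : R) (n : ℕ) :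
    birkhoffAverage ℂ (w * · * star w) id n z =
      (n : ℂ)⁻¹ • ∑ k ∈ range n, w ^ k * z * star (w ^ k) := by
  simp only [birkhoffAverage, birkhoffSum, iterate_conj_apply, id]

lemma iterate_conj_of_eigen {w v : R} {c : ℂ} (h : w * v * star w = c • v) (k : ℕ) :
    (w * · * star w)^[k] v = c ^ k • v := by
  induction k with
  | zero => simp
  | succ k ih =>
    rw [Function.iterate_succ_apply', ih, mul_smul_comm, smul_mul_assoc, h, smul_smul, pow_succ]

lemma birkhoffAverage_conj_mem (I : TwoSidedIdeal R) (w : R) {z : R} (hz : z ∈ I) (n : ℕ) :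
    birkhoffAverage ℂ (w * · * star w) id n z ∈ I := by
  rw [birkhoffAverage_conj_apply]
  exact I.algebra_smul_mem _ (sum_mem fun k _ => I.mul_mem_right _ _ (I.mul_mem_left _ _ hz))

end Algebra

section CStarAlgebra

variable {B : Type*} [CStarAlgebra B]

lemma norm_conj_of_mem_unitary {w : B} (hw : w ∈ unitary B) (z : B) :
    ‖w * z * star w‖ = ‖z‖ := by
  rw [CStarRing.norm_mul_mem_unitary _ (Unitary.star_mem hw), CStarRing.norm_mem_unitary_mul z hw]

lemma norm_conj_sub_le {w : B} (hw : w ∈ unitary B) (y b : B) :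
    ‖w * y * star w - y‖ ≤ ‖w * b * star w - b‖ + 2 * ‖y - b‖ := by
  calc ‖w * y * star w - y‖ = ‖w * (y - b) * star w + (w * b * star w - b) + (b - y)‖ := by
        congr 1; noncomm_ring
    _ ≤ ‖w * (y - b) * star w‖ + ‖w * b * star w - b‖ + ‖b - y‖ := norm_add₃_le
    _ = ‖w * b * star w - b‖ + 2 * ‖y - b‖ := by
        rw [norm_conj_of_mem_unitary hw, norm_sub_rev b y]; ring

lemma card_mul_sub_le_norm_sum [PartialOrder B] [StarOrderedRing B] {κ : Type*}
    {s t : Finset κ} (hts : t ⊆ s) {a : κ → B} (ha : ∀ k ∈ s, 0 ≤ a k) {y : B} {r : ℝ}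
    (hr : ∀ k ∈ t, ‖a k - y‖ ≤ r) : #t * (‖y‖ - r) ≤ ‖∑ k ∈ s, a k‖ := by
  have hdev : ‖∑ k ∈ t, (a k - y)‖ ≤ #t * r :=
    (norm_sum_le _ _).trans ((sum_le_sum hr).trans_eq (by rw [sum_const, nsmul_eq_mul]))
  have hy : ‖∑ k ∈ t, y‖ = #t * ‖y‖ := by rw [sum_const, RCLike.norm_nsmul ℂ, nsmul_eq_mul]
  calc #t * (‖y‖ - r) ≤ ‖∑ k ∈ t, y‖ - ‖∑ k ∈ t, (a k - y)‖ := by rw [hy]; linarith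
    _ ≤ ‖∑ k ∈ t, a k‖ := by
      have hsum : ∑ k ∈ t, y = ∑ k ∈ t, a k - ∑ k ∈ t, (a k - y) := by
        rw [sum_sub_distrib, sub_sub_cancel]
      linarith [hsum ▸ norm_sub_le (∑ k ∈ t, a k) (∑ k ∈ t, (a k - y))]
    _ ≤ ‖∑ k ∈ s, a k‖ :=
      CStarAlgebra.norm_le_norm_of_nonneg_of_le (sum_nonneg fun k hk => ha k (hts hk))
        (sum_le_sum_of_subset_of_nonneg hts fun k hk _ => ha k hk)

lemma tendsto_birkhoffAverage_conj_of_eigen_ne_one {w v : B} {c : Circle}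
    (h : w * v * star w = c • v) (hc : c ≠ 1) :
    Tendsto (birkhoffAverage ℂ (w * · * star w) id · v) atTop (𝓝 0) := by
  have hav : ∀ n, birkhoffAverage ℂ (w * · * star w) id n v =
      ((n : ℂ)⁻¹ * ∑ k ∈ range n, (c : ℂ) ^ k) • v := fun n => by
    simp only [birkhoffAverage, birkhoffSum, iterate_conj_of_eigen h, id, ← sum_smul, smul_smul]
  simpa [hav] using (tendsto_inv_mul_geom_sum_of_ne_one (Circle.norm_coe c).le
    (fun h1 => hc (Circle.ext h1))).smul_const v

lemma tendsto_birkhoffAverage_conj_of_mem_closure_span {w : B} (hw : w ∈ unitary B)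
    (φ : B →L[ℂ] ℂ) {s : Set B}
    (hs : ∀ v ∈ s, Tendsto (birkhoffAverage ℂ (w * · * star w) id · v) atTop (𝓝 (φ v • 1)))
    {z : B} (hz : z ∈ closure (span ℂ s : Set B)) :
    Tendsto (birkhoffAverage ℂ (w * · * star w) id · z) atTop (𝓝 (φ z • 1)) := by
  let M : Submodule ℂ B :=
    { carrier := {z | Tendsto (birkhoffAverage ℂ (w * · * star w) id · z) atTop (𝓝 (φ z • 1))}
      add_mem' := fun {a b} ha hb => by
        simpa [birkhoffAverage_conj_apply, mul_add, add_mul, sum_add_distrib, add_smul]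
          using ha.add hb
      zero_mem' := by simp [birkhoffAverage_conj_apply]
      smul_mem' := fun c a ha => by
        simpa [birkhoffAverage_conj_apply, ← smul_sum, smul_comm _ c, smul_smul, mul_comm]
          using ha.const_smul c }
  have hM : IsClosed (M : Set B) :=
    isClosed_setOfPred_tendsto_birkhoffAverage ℂ
      (LipschitzWith.of_dist_le_mul fun a b => by
        simp [dist_eq_norm, ← mul_sub, ← sub_mul, norm_conj_of_mem_unitary hw])
      uniformContinuous_id (by fun_prop)
  exact closure_minimal (span_le.2 fun v hv => hs v hv) hM hz

lemma exists_pos_density_norm_conj_pow_sub_le {ι : Type*} {w : B} {v : ι → B}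
    {χ : ι → Circle} (hv : ∀ i, w * v i * star w = χ i • v i) {b : B}
    (hb : b ∈ span ℂ (Set.range v)) {r : ℝ} (hr : 0 < r) :
    ∃ δ : ℝ, 0 < δ ∧
      ∀ᶠ n : ℕ in atTop, δ * n ≤ #{k ∈ range n | ‖w ^ k * b * star (w ^ k) - b‖ ≤ r} := by
  classical
  obtain ⟨c, rfl⟩ := Finsupp.mem_span_range_iff_exists_finsupp.1 hb
  -- the orbit of `b` is the image of the orbit of `χ` in the compact group `ι → Circle`
  let Ψ : (ι → Circle) → B := fun h => c.sum fun i a => (a * h i) • v i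
  have hΨ : Continuous Ψ := continuous_finsetSum _ fun i _ =>
    (continuous_const.mul (continuous_subtype_val.comp (continuous_apply i))).smul continuous_const
  have hΨpow : ∀ k : ℕ, Ψ (χ ^ k) = w ^ k * (c.sum fun i a => a • v i) * star (w ^ k) := by
    intro k
    simp only [Ψ, Finsupp.sum, mul_sum, sum_mul, mul_smul_comm, smul_mul_assoc,
      ← iterate_conj_apply, iterate_conj_of_eigen (hv _), Pi.pow_apply, Circle.coe_pow, smul_smul]
  obtain ⟨δ, hδ, hdens⟩ := exists_pos_density_pow_mem χ
    (hΨ.continuousAt.preimage_mem_nhds (Metric.closedBall_mem_nhds (Ψ 1) hr))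
  refine ⟨δ, hδ, hdens.mono fun n hn =>
    hn.trans (Nat.cast_le.2 (card_le_card (monotone_filter_right _ ?_)))⟩
  intro k _ hk
  have hΨ1 : Ψ 1 = c.sum fun i a => a • v i := by simp [Ψ]
  rwa [Set.mem_preimage, hΨpow, hΨ1, Metric.mem_closedBall, dist_eq_norm] at hk

lemma mul_norm_le_of_tendsto_birkhoffAverage_conj [Nontrivial B] [PartialOrder B]
    [StarOrderedRing B] {w y : B} (hy : 0 ≤ y) {c : ℂ}
    (hlim : Tendsto (birkhoffAverage ℂ (w * · * star w) id · y) atTop (𝓝 (c • 1))) {δ : ℝ}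
    (hδ : ∀ᶠ n : ℕ in atTop, δ * n ≤ #{k ∈ range n | ‖w ^ k * y * star (w ^ k) - y‖ ≤ ‖y‖ / 2}) :
    δ * (‖y‖ / 2) ≤ ‖c‖ := by
  have hbound : ∀ᶠ n : ℕ in atTop,
      δ * (‖y‖ / 2) ≤ ‖birkhoffAverage ℂ (w * · * star w) id n y‖ := by
    filter_upwards [hδ, eventually_gt_atTop 0] with n hn hn0
    have hsum := card_mul_sub_le_norm_sum (y := y) (r := ‖y‖ / 2) (filter_subset _ (range n))
      (fun k _ => star_right_conjugate_nonneg hy (w ^ k)) (fun k hk => (mem_filter.1 hk).2)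
    have hn0' : (0 : ℝ) < n := Nat.cast_pos.2 hn0
    rw [birkhoffAverage_conj_apply, norm_smul, norm_inv, Complex.norm_natCast,
      le_inv_mul_iff₀ hn0']
    calc n * (δ * (‖y‖ / 2)) = δ * n * (‖y‖ - ‖y‖ / 2) := by ring
      _ ≤ _ := by gcongr; linarith [norm_nonneg y]
      _ ≤ _ := hsum
  simpa [norm_smul] using ge_of_tendsto hlim.norm hbound

theorem TwoSidedIdeal.one_mem_of_eigenvectors {ι : Type*} {w : B} (hw : w ∈ unitary B)
    {v : ι → B} {χ : ι → Circle} (hv : ∀ i, w * v i * star w = χ i • v i) (φ : B →L[ℂ] ℂ)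
    (hfix : ∀ i, χ i = 1 → v i = φ (v i) • 1) (hmove : ∀ i, χ i ≠ 1 → φ (v i) = 0)
    (I : TwoSidedIdeal B) (hI : IsClosed (I : Set B)) {x : B} (hxI : x ∈ I) (hx : x ≠ 0)
    (hxv : star x * x ∈ closure (Submodule.span ℂ (Set.range v) : Set B)) : (1 : B) ∈ I := by
  have : Nontrivial B := ⟨⟨x, 0, hx⟩⟩
  let _ : PartialOrder B := CStarAlgebra.spectralOrder B
  have : StarOrderedRing B := CStarAlgebra.spectralOrderedRing B
  set y := star x * x
  have hy0 : 0 ≤ y := star_mul_self_nonneg x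
  have hy : 0 < ‖y‖ := by
    rw [CStarRing.norm_star_mul_self]; exact mul_pos (norm_pos_iff.2 hx) (norm_pos_iff.2 hx)
  have hlim : Tendsto (birkhoffAverage ℂ (w * · * star w) id · y) atTop (𝓝 (φ y • 1)) := by
    refine tendsto_birkhoffAverage_conj_of_mem_closure_span hw φ ?_ hxv
    rintro _ ⟨i, rfl⟩
    by_cases hχ : χ i = 1
    · rw [← hfix i hχ]
      have hfixed : Function.IsFixedPt (w * · * star w) (v i) := by
        change w * v i * star w = v i
        rw [hv i, hχ, one_smul]
      exact hfixed.tendsto_birkhoffAverage ℂ id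
    · rw [hmove i hχ, zero_smul]
      exact tendsto_birkhoffAverage_conj_of_eigen_ne_one (hv i) hχ
  -- `φ y ≠ 0` because a positive proportion of the conjugates of `y` stay close to `y`
  obtain ⟨b, hb, hyb⟩ := Metric.mem_closure_iff.1 hxv (‖y‖ / 8) (by positivity)
  obtain ⟨δ, hδ, hgood⟩ := exists_pos_density_norm_conj_pow_sub_le hv hb (r := ‖y‖ / 4)
    (by positivity)
  have hφy : δ * (‖y‖ / 2) ≤ ‖φ y‖ := by
    refine mul_norm_le_of_tendsto_birkhoffAverage_conj hy0 hlim (hgood.mono fun n hn =>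
      hn.trans (Nat.cast_le.2 (card_le_card (monotone_filter_right _ fun k _ hk => ?_))))
    rw [dist_eq_norm] at hyb
    linarith [norm_conj_sub_le (pow_mem hw k) y b]
  have hφy0 : φ y ≠ 0 := norm_pos_iff.1 (lt_of_lt_of_le (by positivity) hφy)
  have hmem : φ y • (1 : B) ∈ I :=
    hI.mem_of_tendsto hlim (.of_forall (birkhoffAverage_conj_mem I w (I.mul_mem_left _ _ hxI)))
  simpa [smul_smul, hφy0] using I.algebra_smul_mem (φ y)⁻¹ hmem

end CStarAlgebra

section CrossedProduct

variable {A B : Type*} [CommRing A] [StarRing A] [Algebra ℂ A] [Ring B] [StarRing B] [Algebra ℂ B]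

lemma star_exp_neg_I_mul_smul [StarModule ℂ A] (a : A) (s t : ℝ) :
    star (Complex.exp (-(Complex.I * s * t)) • a) = (Circle.exp (s * t) : ℂ) • star a := by
  rw [star_smul, Circle.coe_exp, Complex.star_def, ← Complex.exp_conj]
  congr 2
  simp only [map_neg, map_mul, Complex.conj_I, Complex.conj_ofReal]
  push_cast
  ring

lemma conj_ι_monomial [StarModule ℂ A] {e : ℝ → A} (he : ∀ l, e l ∈ unitary A) {τ : ℝ → A ≃⋆ₐ[ℂ] A}
    (hτe : ∀ s l : ℝ, τ s (e l) = Complex.exp (-(Complex.I * l * s)) • e l)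
    (ι : A →⋆ₐ[ℂ] B) {u : ℝ → B} (hu : ∀ s, u s ∈ unitary B)
    (hcov : ∀ (s : ℝ) (a : A), u s * ι a * star (u s) = ι (τ s a)) (μ : ℝ) (a : A) (s : ℝ) :
    ι (e μ) * (ι a * u s) * star (ι (e μ)) = Circle.exp (μ * s) • (ι a * u s) := by
  have hswap := mul_eq_mul_of_conj_eq (hu s) (hcov s (star (e μ)))
  rw [map_star, ← map_star, map_star (τ s), hτe, star_exp_neg_I_mul_smul] at hswap
  calc ι (e μ) * (ι a * u s) * star (ι (e μ))
      = ι (e μ * a) * (u s * ι (star (e μ))) := by rw [map_star, map_mul]; noncomm_ring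
    _ = Circle.exp (μ * s) • ι (a * (e μ * star (e μ))) * u s := by
      rw [hswap, map_smul, smul_mul_assoc, mul_smul_comm, ← mul_assoc, ← map_mul, mul_assoc,
        mul_left_comm, Circle.smul_def, smul_mul_assoc]
    _ = Circle.exp (μ * s) • (ι a * u s) := by
      rw [Unitary.mul_star_self_of_mem (he μ), mul_one, smul_mul_assoc]

lemma conj_u_monomial {e : ℝ → A} {τ : ℝ → A ≃⋆ₐ[ℂ] A}
    (hτe : ∀ s l : ℝ, τ s (e l) = Complex.exp (-(Complex.I * l * s)) • e l)
    (ι : A →⋆ₐ[ℂ] B) {u : ℝ → B} (hu : ∀ s, u s ∈ unitary B)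
    (huadd : ∀ s t : ℝ, u (s + t) = u s * u t)
    (hcov : ∀ (s : ℝ) (a : A), u s * ι a * star (u s) = ι (τ s a)) (ν l s : ℝ) :
    u ν * (ι (e l) * u s) * star (u ν) = Circle.exp (-(ν * l)) • (ι (e l) * u s) := by
  have hcomm : u ν * u s = u s * u ν := by rw [← huadd, ← huadd, add_comm]
  calc u ν * (ι (e l) * u s) * star (u ν)
      = ι (τ ν (e l)) * (u ν * u s * star (u ν)) := by
        rw [← mul_assoc, mul_eq_mul_of_conj_eq (hu ν) (hcov ν _)]; noncomm_ring
    _ = Circle.exp (-(ν * l)) • (ι (e l) * u s) := by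
      rw [hcomm, mul_assoc, Unitary.mul_star_self_of_mem (hu ν), mul_one, hτe, map_smul,
        smul_mul_assoc, Circle.smul_def, Circle.coe_exp]
      congr 2
      push_cast
      ring

lemma conj_monomial [StarModule ℂ A] {e : ℝ → A} (he : ∀ l, e l ∈ unitary A) {τ : ℝ → A ≃⋆ₐ[ℂ] A}
    (hτe : ∀ s l : ℝ, τ s (e l) = Complex.exp (-(Complex.I * l * s)) • e l)
    (ι : A →⋆ₐ[ℂ] B) {u : ℝ → B} (hu : ∀ s, u s ∈ unitary B)
    (huadd : ∀ s t : ℝ, u (s + t) = u s * u t)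
    (hcov : ∀ (s : ℝ) (a : A), u s * ι a * star (u s) = ι (τ s a)) (μ ν l s : ℝ) :
    (u ν * ι (e μ)) * (ι (e l) * u s) * star (u ν * ι (e μ)) =
      Circle.exp (μ * s - ν * l) • (ι (e l) * u s) := by
  have hsplit : (u ν * ι (e μ)) * (ι (e l) * u s) * star (u ν * ι (e μ)) =
      u ν * (ι (e μ) * (ι (e l) * u s) * star (ι (e μ))) * star (u ν) := by
    rw [star_mul]; noncomm_ring
  rw [hsplit, conj_ι_monomial he hτe ι hu hcov, mul_smul_comm, smul_mul_assoc,
    conj_u_monomial hτe ι hu huadd hcov, smul_smul, ← Circle.exp_add]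
  ring_nf

lemma coeff_zero_ι_mul [TopologicalSpace A] [TopologicalSpace B] {e : ℝ → A}
    {ε : ℝ → (A →L[ℂ] ℂ)} (hεcoeff : ∀ l l' : ℝ, ε l (e l') = if l = l' then 1 else 0)
    {ι : A →⋆ₐ[ℂ] B} {u : ℝ → B} {E : ℝ → (B →L[ℂ] A)}
    (hEcoeff : ∀ (s t : ℝ) (a : A), E s (ι a * u t) = if s = t then a else 0) (p : ℝ × ℝ) :
    ε 0 (E 0 (ι (e p.1) * u p.2)) = if p = 0 then 1 else 0 := by
  obtain ⟨l, s⟩ := p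
  rcases eq_or_ne s 0 with rfl | hs
  · rcases eq_or_ne l 0 with rfl | hl
    · simp [hEcoeff, hεcoeff]
    · simp [hEcoeff, hεcoeff, hl, hl.symm]
  · simp [hEcoeff, hs, hs.symm]

end CrossedProduct

lemma dense_span_range_mul {A B : Type*} [CStarAlgebra A] [CStarAlgebra B] {e : ℝ → A}
    (hAdense : Dense {x : A | ∃ (F : Finset ℝ) (c : ℝ → ℂ), x = ∑ l ∈ F, c l • e l})
    (ι : A →⋆ₐ[ℂ] B) {u : ℝ → B}
    (hdense : Dense {x : B | ∃ (F : Finset ℝ) (c : ℝ → A), x = ∑ s ∈ F, ι (c s) * u s}) :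
    Dense (span ℂ (Set.range fun p : ℝ × ℝ => ι (e p.1) * u p.2) : Set B) := by
  set S := span ℂ (Set.range fun p : ℝ × ℝ => ι (e p.1) * u p.2)
  set M := S.topologicalClosure
  have he : Dense (span ℂ (Set.range e) : Set A) := hAdense.mono <| by
    rintro _ ⟨F, c, rfl⟩; exact sum_mem fun l _ => smul_mem _ _ (subset_span ⟨l, rfl⟩)
  have hι : Continuous ι := AddMonoidHomClass.continuous_of_bound ι 1 fun a => by
    simpa using NonUnitalStarAlgHom.norm_apply_le ι a
  have hmem : ∀ a s, ι a * u s ∈ M := by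
    intro a s
    let N : Submodule ℂ A := M.comap ((LinearMap.mulRight ℂ (u s)).comp ι.toLinearMap)
    have hN : IsClosed (N : Set A) :=
      S.isClosed_topologicalClosure.preimage (hι.mul continuous_const :
        Continuous fun a => ι a * u s)
    have heN : span ℂ (Set.range e) ≤ N := span_le.2 <| Set.range_subset_iff.2 fun l =>
      S.le_topologicalClosure (subset_span ⟨(l, s), rfl⟩)
    exact closure_minimal heN hN (he.closure_eq ▸ Set.mem_univ a)
  have hM : Dense (M : Set B) :=
    hdense.mono (by rintro _ ⟨F, c, rfl⟩; exact sum_mem fun s _ => hmem (c s) s)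
  rwa [Submodule.topologicalClosure_coe, dense_closure] at hM

theorem stmt15_general
    {A : Type} [NormedCommRing A] [StarRing A] [CStarRing A] [NormedAlgebra ℂ A]
    [StarModule ℂ A] [CompleteSpace A]
    (e : ℝ → A) (he : ∀ l, e l ∈ unitary A) (he0 : e 0 = 1)
    (hAdense : Dense {x : A | ∃ (F : Finset ℝ) (c : ℝ → ℂ), x = ∑ l ∈ F, c l • e l})
    (ε : ℝ → (A →L[ℂ] ℂ))
    (hεcoeff : ∀ l l' : ℝ, ε l (e l') = if l = l' then 1 else 0)
    (τ : ℝ → A ≃⋆ₐ[ℂ] A)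
    (hτe : ∀ (s l : ℝ), τ s (e l) = Complex.exp (-(Complex.I * l * s)) • e l)
    {B : Type} [NormedRing B] [StarRing B] [CStarRing B] [NormedAlgebra ℂ B]
    [StarModule ℂ B] [CompleteSpace B]
    (ι : A →⋆ₐ[ℂ] B)
    (u : ℝ → B) (hu : ∀ s, u s ∈ unitary B) (hu0 : u 0 = 1)
    (huadd : ∀ s t : ℝ, u (s + t) = u s * u t)
    (hcov : ∀ (s : ℝ) (a : A), u s * ι a * star (u s) = ι (τ s a))
    (hdense : Dense {x : B | ∃ (F : Finset ℝ) (c : ℝ → A), x = ∑ s ∈ F, ι (c s) * u s})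
    (E : ℝ → (B →L[ℂ] A))
    (hEcoeff : ∀ (s t : ℝ) (a : A), E s (ι a * u t) = if s = t then a else 0) :
    ∀ S : Set B, IsClosed S → S.Nonempty →
      (∀ x y, x ∈ S → y ∈ S → x + y ∈ S) →
      (∀ x z, x ∈ S → z * x ∈ S ∧ x * z ∈ S) →
      S = {0} ∨ S = Set.univ := by
  intro S hS hne hadd hmul
  obtain ⟨I, rfl⟩ := TwoSidedIdeal.exists_coe_eq hne hadd hmul
  by_cases hI : ∀ x ∈ I, x = 0
  · exact Or.inl (Set.eq_singleton_iff_unique_mem.2 ⟨I.zero_mem, hI⟩)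
  push Not at hI
  obtain ⟨x, hxI, hx⟩ := hI
  let _ : CStarAlgebra A := {}
  let _ : CStarAlgebra B := {}
  set V : ℝ × ℝ → B := fun p => ι (e p.1) * u p.2
  obtain ⟨Λ, hΛ, hxΛ⟩ := exists_countable_mem_closure_span
    ((dense_span_range_mul hAdense ι hdense).closure_eq ▸ Set.mem_univ (star x * x))
  obtain ⟨μ, ν, hres⟩ := exists_forall_circleExp_sub_ne_one hΛ
  have h1 : (1 : B) ∈ I := by
    refine I.one_mem_of_eigenvectors (mul_mem (hu ν) (Unitary.map_mem ι (he μ)))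
      (v := fun p : Λ => V p) (χ := fun p => Circle.exp (μ * p.1.2 - ν * p.1.1))
      (fun p => conj_monomial he hτe ι hu huadd hcov μ ν _ _) ((ε 0).comp (E 0)) ?_ ?_
      hS hxI hx (by rwa [← Set.image_eq_range])
    · intro p hp
      have hp0 : (p : ℝ × ℝ) = 0 := by_contra fun h => hres p p.2 h hp
      rw [ContinuousLinearMap.comp_apply, coeff_zero_ι_mul hεcoeff hEcoeff, if_pos hp0,
        one_smul, hp0]
      simp [V, he0, hu0]
    · intro p hp
      rw [ContinuousLinearMap.comp_apply, coeff_zero_ι_mul hεcoeff hEcoeff,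
        if_neg fun h => hp (by simp [h])]
  exact Or.inr (by rw [I.eq_top h1, TwoSidedIdeal.coe_top])

/-- The crossed product `AP(ℝ) ⋊_τ ℝ_d` of the almost periodic functions by the translation
action of the discrete reals is simple. Here `AP(ℝ)` is presented as a commutative C*-algebra
`A` generated by a unitary representation `e` of `ℝ_d` (the exponentials `e^{iλx}`) together
with its contractive Bohr–Fourier coefficient functionals `ε_λ`; the translation action `τ`
satisfies `τ_s(e^{iλx}) = e^{-iλs} e^{iλx}`; and the crossed product `B` is presented by the
covariant pair `(ι, u)`, density of trigonometric polynomials, and the canonical contractive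
Fourier-coefficient maps `E_s`. Conclusion: every closed two-sided ideal of `B` is `{0}` or
all of `B`. -/
theorem stmt15
    {A : Type} [NormedCommRing A] [StarRing A] [CStarRing A] [NormedAlgebra ℂ A]
    [StarModule ℂ A] [CompleteSpace A]
    (e : ℝ → A) (he : ∀ l, e l ∈ unitary A) (he0 : e 0 = 1)
    (headd : ∀ l l' : ℝ, e (l + l') = e l * e l')
    (hAdense : Dense {x : A | ∃ (F : Finset ℝ) (c : ℝ → ℂ), x = ∑ l ∈ F, c l • e l})
    (ε : ℝ → (A →L[ℂ] ℂ)) (hεcontr : ∀ l, ‖ε l‖ ≤ 1)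
    (hεcoeff : ∀ l l' : ℝ, ε l (e l') = if l = l' then 1 else 0)
    (τ : ℝ → A ≃⋆ₐ[ℂ] A) (hτ : ∀ s t : ℝ, τ (s + t) = (τ t).trans (τ s))
    (hτe : ∀ (s l : ℝ), τ s (e l) = Complex.exp (-(Complex.I * l * s)) • e l)
    {B : Type} [NormedRing B] [StarRing B] [CStarRing B] [NormedAlgebra ℂ B]
    [StarModule ℂ B] [CompleteSpace B]
    (ι : A →⋆ₐ[ℂ] B) (hι : Isometry ι)
    (u : ℝ → B) (hu : ∀ s, u s ∈ unitary B) (hu0 : u 0 = 1)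
    (huadd : ∀ s t : ℝ, u (s + t) = u s * u t)
    (hcov : ∀ (s : ℝ) (a : A), u s * ι a * star (u s) = ι (τ s a))
    (hdense : Dense {x : B | ∃ (F : Finset ℝ) (c : ℝ → A), x = ∑ s ∈ F, ι (c s) * u s})
    (E : ℝ → (B →L[ℂ] A)) (hEcontr : ∀ s, ‖E s‖ ≤ 1)
    (hEcoeff : ∀ (s t : ℝ) (a : A), E s (ι a * u t) = if s = t then a else 0) :
    ∀ S : Set B, IsClosed S → S.Nonempty →
      (∀ x y, x ∈ S → y ∈ S → x + y ∈ S) →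
      (∀ x z, x ∈ S → z * x ∈ S ∧ x * z ∈ S) →
      S = {0} ∨ S = Set.univ :=
  stmt15_general e he he0 hAdense ε hεcoeff τ hτe ι u hu hu0 huadd hcov hdense E hEcoeff
end
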